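/- arXiv:1911.03616 — 3 statements merged into one kernel-verified Lean document; each statement's English description precedes it below -/
import Mathlib

section
/- Let T ⊆ ℝ³ be a nonempty bounded open connected set and let ℓ ≥ 1 be an integer. For every polynomial p in three variables of total degree at most ℓ − 1 there exists a unique vector field v ∈ P^ℓ(ℝ³)³ such that div v = p (as functions on ℝ³) and ∫_T v · (curl w) dx = 0 for every w ∈ P^{ℓ+1}(ℝ³)³. In other words, the divergence restricted to the L²(T)-orthogonal complement in P^ℓ(ℝ³)³ of the space {curl w : w ∈ P^{ℓ+1}(ℝ³)³} is a linear isomorphism onto P^{ℓ−1}(ℝ³). -/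
/-!
Let `E = ∑ xᵢ ∂ᵢ` be the Euler operator; `n + E` acts on the monomials of degree `k` as
multiplication by `k + n`, so it is invertible on polynomials and preserves degrees. Since
`div (ψ x) = (3 + E) ψ`, the divergence maps `P^ℓ(ℝ³)³` onto `P^{ℓ-1}(ℝ³)`, and since
`curl (u × x) = (2 + E) u - x div u` while `∂ᵢ (2 + E)⁻¹ = (3 + E)⁻¹ ∂ᵢ`, every divergence-free
`v ∈ P^ℓ(ℝ³)³` is the curl of `(2 + E)⁻¹ v × x ∈ P^{ℓ+1}(ℝ³)³`. Hence the fields orthogonal to all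
such curls are exactly the `L²(T)`-orthogonal complement of `ker div` in `P^ℓ(ℝ³)³`. The
`L²(T)` form is positive definite there, because a polynomial vanishing on a nonempty open set is
zero, and in finite dimension the orthogonal complement of `ker div` is then a complement of it,
on which `div` is bijective onto its image.
-/

open MvPolynomial MeasureTheory

/-- The curl of a polynomial vector field on `ℝ³`, as a polynomial vector field. -/
noncomputable def pcurl3 (w : Fin 3 → MvPolynomial (Fin 3) ℝ) : Fin 3 → MvPolynomial (Fin 3) ℝ :=
  ![pderiv 1 (w 2) - pderiv 2 (w 1),
    pderiv 2 (w 0) - pderiv 0 (w 2),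
    pderiv 0 (w 1) - pderiv 1 (w 0)]

open Topology

theorem LinearMap.BilinForm.existsUnique_mem_eq_and_orthogonal_ker {K M N : Type*} [Field K]
    [AddCommGroup M] [Module K M] [AddCommGroup N] [Module K N]
    (B : LinearMap.BilinForm K M) (hB : B.IsRefl) (V : Submodule K M) [FiniteDimensional K V]
    (hBV : ∀ v ∈ V, B v v = 0 → v = 0) (D : M →ₗ[K] N) {v₀ : M} (hv₀ : v₀ ∈ V) :
    ∃! v, v ∈ V ∧ D v = D v₀ ∧ ∀ k ∈ V, D k = 0 → B v k = 0 := by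
  set W := LinearMap.ker (D ∘ₗ V.subtype)
  have hcompl : IsCompl W ((B.restrict V).orthogonal W) := by
    refine (isCompl_orthogonal_iff_disjoint (B := B.restrict V) fun x y => hB x y).mpr ?_
    refine Submodule.disjoint_def.mpr fun x hxW hx => Subtype.ext (hBV x x.2 (hx x hxW))
  obtain ⟨k, v, hk, hv, hsum⟩ :=
    Submodule.codisjoint_iff_exists_add_eq.mp hcompl.codisjoint ⟨v₀, hv₀⟩
  have hDv : D v = D v₀ := by
    have hDk : D k = 0 := hk
    simpa [hDk] using congr(D (Subtype.val $hsum))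
  have hvorth : ∀ k ∈ V, D k = 0 → B v k = 0 := fun k hkV hDk => hB _ _ (hv ⟨k, hkV⟩ hDk)
  refine ⟨v, ⟨v.2, hDv, hvorth⟩, ?_⟩
  rintro u ⟨huV, hDu, hu⟩
  have hd : u - v ∈ V := V.sub_mem huV v.2
  have hDd : D (u - v) = 0 := by rw [map_sub, hDu, hDv, sub_self]
  refine sub_eq_zero.mp (hBV _ hd ?_)
  rw [LinearMap.map_sub₂, hu _ hd hDd, hvorth _ hd hDd, sub_zero]

namespace MvPolynomial

section CommSemiring

variable {σ R : Type*} [CommSemiring R]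

theorem totalDegree_pderiv_le (i : σ) (q : MvPolynomial σ R) :
    (pderiv i q).totalDegree ≤ q.totalDegree - 1 := by
  classical
  refine Finset.sup_le fun d hd => ?_
  have hq : coeff (d + Finsupp.single i 1) q ≠ 0 := by
    intro h
    rw [MvPolynomial.mem_support_iff, coeff_pderiv, h, zero_mul] at hd
    exact hd rfl
  have hdeg : (d + Finsupp.single i 1).degree ≤ q.totalDegree :=
    le_totalDegree (MvPolynomial.mem_support_iff.mpr hq)
  rw [map_add, Finsupp.degree_single] at hdeg
  change d.degree ≤ _
  omega

noncomputable def scaleByDegree (c : ℕ → R) (q : MvPolynomial σ R) : MvPolynomial σ R :=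
  ∑ d ∈ q.support, monomial d (c d.degree * coeff d q)

theorem coeff_scaleByDegree (c : ℕ → R) (q : MvPolynomial σ R) (e : σ →₀ ℕ) :
    coeff e (scaleByDegree c q) = c e.degree * coeff e q := by
  classical
  rw [scaleByDegree, coeff_sum]
  simp only [coeff_monomial]
  rw [Finset.sum_ite_eq']
  split_ifs with he
  · rfl
  · rw [notMem_support_iff.mp he, mul_zero]

theorem totalDegree_scaleByDegree_le (c : ℕ → R) (q : MvPolynomial σ R) :
    (scaleByDegree c q).totalDegree ≤ q.totalDegree :=
  (totalDegree_finsetSum _ _).trans <| Finset.sup_le fun _ hd =>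
    (totalDegree_monomial_le _ _).trans (le_totalDegree hd)

theorem pderiv_scaleByDegree (c : ℕ → R) (i : σ) (q : MvPolynomial σ R) :
    pderiv i (scaleByDegree c q) = scaleByDegree (fun k => c (k + 1)) (pderiv i q) := by
  classical
  ext e
  simp only [coeff_pderiv, coeff_scaleByDegree, map_add, Finsupp.degree_single]
  ring

theorem coeff_X_mul_pderiv (i : σ) (q : MvPolynomial σ R) (e : σ →₀ ℕ) :
    coeff e (X i * pderiv i q) = e i * coeff e q := by
  classical
  induction q using MvPolynomial.induction_on' with
  | add p q hp hq => simp only [map_add, mul_add, coeff_add, hp, hq]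
  | monomial m r =>
    rw [X_mul_pderiv_monomial, coeff_smul, coeff_monomial]
    split_ifs with h
    · subst h; simp [nsmul_eq_mul]
    · simp

theorem coeff_sum_X_mul_pderiv [Fintype σ] (q : MvPolynomial σ R) (e : σ →₀ ℕ) :
    coeff e (∑ i, X i * pderiv i q) = e.degree * coeff e q := by
  simp only [coeff_sum, coeff_X_mul_pderiv, ← Finset.sum_mul, Finsupp.degree_eq_sum, Nat.cast_sum]

theorem sum_pderiv_X_mul [Fintype σ] (q : MvPolynomial σ R) :
    ∑ i, pderiv i (X i * q) = Fintype.card σ • q + ∑ i, X i * pderiv i q := by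
  simp [Finset.sum_add_distrib, add_comm]

noncomputable def pdiv [Fintype σ] : (σ → MvPolynomial σ R) →ₗ[R] MvPolynomial σ R :=
  ∑ i, (pderiv i).toLinearMap ∘ₗ LinearMap.proj i

theorem pdiv_apply [Fintype σ] (v : σ → MvPolynomial σ R) : pdiv v = ∑ i, pderiv i (v i) := by
  simp [pdiv]

theorem pdiv_scaleByDegree [Fintype σ] (c : ℕ → R) (v : σ → MvPolynomial σ R) :
    pdiv (fun i => scaleByDegree c (v i)) = scaleByDegree (fun k => c (k + 1)) (pdiv v) := by
  ext e
  simp only [pdiv_apply, coeff_sum, pderiv_scaleByDegree, coeff_scaleByDegree, Finset.mul_sum]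

end CommSemiring

section CommRing

variable {σ R : Type*} [CommRing R]

theorem pderiv_pderiv_comm (i j : σ) (q : MvPolynomial σ R) :
    pderiv i (pderiv j q) = pderiv j (pderiv i q) := by
  classical
  have h : ⁅pderiv i, pderiv j⁆ = (0 : Derivation R (MvPolynomial σ R) (MvPolynomial σ R)) :=
    derivation_ext fun k => by
      rw [Derivation.commutator_apply]
      simp [pderiv_X, Pi.single_apply, apply_ite]
  have := congr($h q)
  rwa [Derivation.commutator_apply, Derivation.zero_apply, sub_eq_zero] at this

end CommRing

section Field

variable {σ K : Type*} [Field K] [CharZero K]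

theorem nsmul_scaleByDegree_add_sum_X_mul_pderiv [Fintype σ] {n : ℕ} (hn : n ≠ 0)
    (q : MvPolynomial σ K) :
    n • scaleByDegree (fun k => ((k + n : ℕ) : K)⁻¹) q
      + ∑ i, X i * pderiv i (scaleByDegree (fun k => ((k + n : ℕ) : K)⁻¹) q) = q := by
  ext e
  rw [coeff_add, coeff_sum_X_mul_pderiv, coeff_smul, coeff_scaleByDegree, nsmul_eq_mul]
  have : ((e.degree + n : ℕ) : K) ≠ 0 := Nat.cast_ne_zero.mpr (by omega)
  field_simp
  push_cast
  ring

theorem exists_pdiv_eq [Fintype σ] [Nonempty σ] (q : MvPolynomial σ K) :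
    ∃ v : σ → MvPolynomial σ K, (∀ i, (v i).totalDegree ≤ q.totalDegree + 1) ∧ pdiv v = q := by
  set ψ := scaleByDegree (fun k => ((k + Fintype.card σ : ℕ) : K)⁻¹) q
  refine ⟨fun i => X i * ψ, fun i => ?_, ?_⟩
  · refine (totalDegree_mul _ _).trans ?_
    rw [totalDegree_X, add_comm]
    exact Nat.add_le_add_right (totalDegree_scaleByDegree_le _ q) 1
  · rw [pdiv_apply, sum_pderiv_X_mul]
    exact nsmul_scaleByDegree_add_sum_X_mul_pderiv Fintype.card_ne_zero q

end Field

section Analysis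

variable {σ : Type*} [Fintype σ]

theorem eq_zero_of_eval_eq_zero_on_isOpen {𝕜 : Type*} [RCLike 𝕜] {U : Set (σ → 𝕜)}
    (hU : IsOpen U) (hne : U.Nonempty) {q : MvPolynomial σ 𝕜} (h : ∀ x ∈ U, eval x q = 0) :
    q = 0 := by
  obtain ⟨x₀, hx₀⟩ := hne
  have hloc : (fun x => eval x q) =ᶠ[𝓝 x₀] fun _ => 0 :=
    Filter.eventually_of_mem (hU.mem_nhds hx₀) h
  have := (AnalyticOnNhd.eval_mvPolynomial q).eq_of_eventuallyEq analyticOnNhd_const hloc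
  exact MvPolynomial.funext fun x => by simpa using congr_fun this x

theorem integrableOn_eval (q : MvPolynomial σ ℝ) {T : Set (σ → ℝ)} (hT : Bornology.IsBounded T)
    (μ : Measure (σ → ℝ)) [IsFiniteMeasureOnCompacts μ] : IntegrableOn (fun x => eval x q) T μ :=
  ((continuous_eval q).continuousOn.integrableOn_compact hT.isCompact_closure).mono_set
    subset_closure

noncomputable def setIntegralEval (μ : Measure (σ → ℝ)) [IsFiniteMeasureOnCompacts μ]
    {T : Set (σ → ℝ)} (hT : Bornology.IsBounded T) : MvPolynomial σ ℝ →ₗ[ℝ] ℝ where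
  toFun q := ∫ x in T, eval x q ∂μ
  map_add' p q := by
    simp only [map_add]
    exact integral_add (p.integrableOn_eval hT μ) (q.integrableOn_eval hT μ)
  map_smul' c q := by
    simp only [smul_eval, RingHom.id_apply, smul_eq_mul]
    exact integral_const_mul c _

noncomputable def l2Form {ι : Type*} [Fintype ι] (μ : Measure (σ → ℝ))
    [IsFiniteMeasureOnCompacts μ] {T : Set (σ → ℝ)} (hT : Bornology.IsBounded T) :
    LinearMap.BilinForm ℝ (ι → MvPolynomial σ ℝ) :=
  (dotProductBilin ℝ ℝ).compr₂ (setIntegralEval μ hT)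

variable {ι : Type*} [Fintype ι] (μ : Measure (σ → ℝ)) [IsFiniteMeasureOnCompacts μ]
  {T : Set (σ → ℝ)} (hT : Bornology.IsBounded T)

theorem l2Form_apply (v w : ι → MvPolynomial σ ℝ) :
    l2Form μ hT v w = ∫ x in T, ∑ i, eval x (v i) * eval x (w i) ∂μ := by
  change ∫ x in T, eval x (∑ i, v i * w i) ∂μ = _
  simp only [map_sum, map_mul]

theorem l2Form_isRefl : (l2Form (ι := ι) μ hT).IsRefl := fun v w h => by
  rw [l2Form_apply] at h ⊢
  simpa only [mul_comm] using h

theorem eq_zero_of_l2Form_self_eq_zero [μ.IsOpenPosMeasure] (hTo : IsOpen T) (hTne : T.Nonempty)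
    {v : ι → MvPolynomial σ ℝ} (h : l2Form μ hT v v = 0) : v = 0 := by
  have hint : IntegrableOn (fun x => ∑ i, eval x (v i) * eval x (v i)) T μ := by
    simpa using (∑ i, v i * v i).integrableOn_eval hT μ
  have hcont : Continuous fun x => ∑ i, eval x (v i) * eval x (v i) :=
    continuous_finsetSum _ fun i _ => (continuous_eval _).mul (continuous_eval _)
  rw [l2Form_apply, setIntegral_eq_zero_iff_of_nonneg_ae ?_ hint] at h
  · have hT0 := Measure.eqOn_open_of_ae_eq h hTo hcont.continuousOn continuousOn_const
    funext i
    refine eq_zero_of_eval_eq_zero_on_isOpen hTo hTne fun x hx => ?_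
    have := (Finset.sum_eq_zero_iff_of_nonneg fun j _ => mul_self_nonneg _).mp (hT0 hx) i
      (Finset.mem_univ i)
    exact mul_self_eq_zero.mp this
  · exact Filter.Eventually.of_forall fun x => Finset.sum_nonneg fun i _ => mul_self_nonneg _

end Analysis

end MvPolynomial

theorem pdiv_pcurl3 (w : Fin 3 → MvPolynomial (Fin 3) ℝ) : pdiv (pcurl3 w) = 0 := by
  simp only [pdiv_apply, Fin.sum_univ_three, pcurl3, Matrix.cons_val_zero, Matrix.cons_val_one,
    Matrix.cons_val_two, Matrix.head_cons, Matrix.tail_cons, map_sub]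
  rw [pderiv_pderiv_comm 0 1, pderiv_pderiv_comm 0 2, pderiv_pderiv_comm 1 2]
  ring

theorem totalDegree_pcurl3_le {n : ℕ} (w : Fin 3 → MvPolynomial (Fin 3) ℝ)
    (hw : ∀ i, (w i).totalDegree ≤ n + 1) (i : Fin 3) : (pcurl3 w i).totalDegree ≤ n := by
  have hd : ∀ j k, (pderiv j (w k)).totalDegree ≤ n := fun j k =>
    (totalDegree_pderiv_le j (w k)).trans (by have := hw k; omega)
  fin_cases i <;> exact (totalDegree_sub _ _).trans (max_le (hd _ _) (hd _ _))

theorem pcurl3_crossProduct_X (u : Fin 3 → MvPolynomial (Fin 3) ℝ) (i : Fin 3) :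
    pcurl3 (crossProduct u X) i = 2 * u i + ∑ j, X j * pderiv j (u i) - X i * pdiv u := by
  fin_cases i <;>
  · simp only [pcurl3, cross_apply, pdiv_apply, Fin.sum_univ_three, Fin.isValue, Fin.zero_eta,
      Fin.mk_one, Fin.reduceFinMk, Matrix.cons_val, Matrix.cons_val_zero, Matrix.cons_val_one,
      map_sub, pderiv_mul, pderiv_X_self, ne_eq, Fin.reduceEq, not_false_eq_true, pderiv_X_of_ne,
      mul_zero]
    ring

theorem exists_pcurl3_eq_of_pdiv_eq_zero {n : ℕ} (v : Fin 3 → MvPolynomial (Fin 3) ℝ)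
    (hv : ∀ i, (v i).totalDegree ≤ n) (hdiv : pdiv v = 0) :
    ∃ w, (∀ i, (w i).totalDegree ≤ n + 1) ∧ pcurl3 w = v := by
  set u := fun i => scaleByDegree (fun k => ((k + 2 : ℕ) : ℝ)⁻¹) (v i)
  have hu : pdiv u = 0 := by
    ext e
    rw [pdiv_scaleByDegree, coeff_scaleByDegree, hdiv, coeff_zero, mul_zero]
  have hXu : ∀ j k, (u j * X k).totalDegree ≤ n + 1 := fun j k =>
    (totalDegree_mul _ _).trans <| by
      rw [totalDegree_X]
      exact Nat.add_le_add_right ((totalDegree_scaleByDegree_le _ _).trans (hv j)) 1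
  refine ⟨crossProduct u X, fun i => ?_, funext fun i => ?_⟩
  · fin_cases i <;> exact (totalDegree_sub _ _).trans (max_le (hXu _ _) (hXu _ _))
  · rw [pcurl3_crossProduct_X, hu, mul_zero, sub_zero]
    have h := nsmul_scaleByDegree_add_sum_X_mul_pderiv two_ne_zero (v i)
    rwa [nsmul_eq_mul, Nat.cast_ofNat] at h

theorem div_iso_curl_orthogonal_complement_general (T : Set (Fin 3 → ℝ)) (hne : T.Nonempty)
    (hopen : IsOpen T) (hbdd : Bornology.IsBounded T)
    (ℓ : ℕ) (hℓ : 1 ≤ ℓ)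
    (p : MvPolynomial (Fin 3) ℝ) (hp : p.totalDegree ≤ ℓ - 1) :
    ∃! v : Fin 3 → MvPolynomial (Fin 3) ℝ,
      (∀ i, (v i).totalDegree ≤ ℓ) ∧
      (∀ x : Fin 3 → ℝ, (∑ i, eval x (pderiv i (v i))) = eval x p) ∧
      (∀ w : Fin 3 → MvPolynomial (Fin 3) ℝ, (∀ i, (w i).totalDegree ≤ ℓ + 1) →
        (∫ x in T, ∑ i, eval x (v i) * eval x (pcurl3 w i)) = 0) := by
  set V : Submodule ℝ (Fin 3 → MvPolynomial (Fin 3) ℝ) :=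
    Submodule.pi Set.univ fun _ => restrictTotalDegree (Fin 3) ℝ ℓ
  have hV : ∀ v, v ∈ V ↔ ∀ i, (v i).totalDegree ≤ ℓ := by
    simp [V, Submodule.mem_pi, mem_restrictTotalDegree]
  have : FiniteDimensional ℝ V :=
    Module.Finite.iff_fg.mpr (Submodule.fg_pi fun _ => Module.Finite.iff_fg.mp inferInstance)
  obtain ⟨v₀, hv₀deg, hv₀⟩ := exists_pdiv_eq p
  have hv₀V : v₀ ∈ V := (hV v₀).mpr fun i => (hv₀deg i).trans (by omega)
  refine (existsUnique_congr fun v => ?_).mp <|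
    (l2Form volume hbdd).existsUnique_mem_eq_and_orthogonal_ker (l2Form_isRefl volume hbdd) V
      (fun v _ => eq_zero_of_l2Form_self_eq_zero volume hbdd hopen hne) pdiv hv₀V
  rw [hV, hv₀, MvPolynomial.funext_iff]
  simp only [pdiv_apply, map_sum]
  refine and_congr_right fun _ => and_congr_right fun _ => ⟨fun h w hw => ?_, fun h k hk hdk => ?_⟩
  · rw [← l2Form_apply]
    exact h _ ((hV _).mpr (totalDegree_pcurl3_le w hw)) (pdiv_pcurl3 w)
  · obtain ⟨w, hw, rfl⟩ := exists_pcurl3_eq_of_pdiv_eq_zero k ((hV k).mp hk) hdk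
    rw [l2Form_apply]
    exact h w hw

/-- On a nonempty bounded open connected `T ⊆ ℝ³` and for `ℓ ≥ 1`, for every
polynomial `p` of total degree `≤ ℓ − 1` there is a unique polynomial vector field
`v ∈ P^ℓ(ℝ³)³` such that `div v = p` as functions on `ℝ³` and `v` is `L²(T)`-orthogonal to
`curl w` for every `w ∈ P^{ℓ+1}(ℝ³)³`. -/
theorem div_iso_curl_orthogonal_complement (T : Set (Fin 3 → ℝ)) (hne : T.Nonempty)
    (hopen : IsOpen T) (hbdd : Bornology.IsBounded T) (hconn : IsConnected T)
    (ℓ : ℕ) (hℓ : 1 ≤ ℓ)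
    (p : MvPolynomial (Fin 3) ℝ) (hp : p.totalDegree ≤ ℓ - 1) :
    ∃! v : Fin 3 → MvPolynomial (Fin 3) ℝ,
      (∀ i, (v i).totalDegree ≤ ℓ) ∧
      (∀ x : Fin 3 → ℝ, (∑ i, eval x (pderiv i (v i))) = eval x p) ∧
      (∀ w : Fin 3 → MvPolynomial (Fin 3) ℝ, (∀ i, (w i).totalDegree ≤ ℓ + 1) →
        (∫ x in T, ∑ i, eval x (v i) * eval x (pcurl3 w i)) = 0) :=
  div_iso_curl_orthogonal_complement_general T hne hopen hbdd ℓ hℓ p hp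
end

section
/- Let ℓ ≥ 0 be an integer and let v ∈ P^ℓ(ℝ³)³ be a polynomial vector field such that div v = 0 identically on ℝ³. Then there exists a polynomial vector field w ∈ P^{ℓ+1}(ℝ³)³ such that curl w = v. (Exactness at the divergence stage of the polynomial de Rham sequence: every divergence-free polynomial vector field of degree at most ℓ is the curl of a polynomial vector field of degree at most ℓ + 1.) -/
/-!
Integrate `v₂` and `v₁` in `z`: the field `(∫₀^z v₂, -∫₀^z v₁, 0)` has curl
`(v₁, v₂, v₃ - v₃|_{z=0})`, because `∂ₓv₁ + ∂ᵧv₂ = -∂_z v₃`. The remaining part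
`(0, 0, v₃|_{z=0})` does not depend on `z` and is the curl of `(0, ∫₀^x v₃|_{z=0}, 0)`.
Integrating a monomial in one variable raises its degree by one, which gives the degree bound.
-/

open MvPolynomial

namespace MvPolynomial

variable {σ R : Type*}

theorem totalDegree_linearMap_le {τ : Type*} [CommSemiring R]
    {f : MvPolynomial σ R →ₗ[R] MvPolynomial τ R}
    {k : ℕ} (hf : ∀ d c, (f (monomial d c)).totalDegree ≤ (d.sum fun _ e => e) + k)
    (p : MvPolynomial σ R) : (f p).totalDegree ≤ p.totalDegree + k := by
  conv_lhs => rw [p.as_sum, map_sum]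
  exact totalDegree_finsetSum_le fun d hd =>
    (hf d _).trans (Nat.add_le_add_right (le_totalDegree hd) k)

variable [Field R]

/-- The antiderivative in the variable `i` vanishing on the hyperplane `Xᵢ = 0`. -/
noncomputable def pintegral (i : σ) : MvPolynomial σ R →ₗ[R] MvPolynomial σ R :=
  (basisMonomials σ R).constr R fun d => monomial (d + Finsupp.single i 1) (d i + 1 : R)⁻¹

theorem pintegral_monomial (i : σ) (d : σ →₀ ℕ) (c : R) :
    pintegral i (monomial d c) = monomial (d + Finsupp.single i 1) (c / (d i + 1)) := by
  have hbasis : pintegral i (monomial d (1 : R))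
      = monomial (d + Finsupp.single i 1) (d i + 1 : R)⁻¹ :=
    (basisMonomials σ R).constr_basis R _ d
  rw [← mul_one c, ← smul_eq_mul, ← smul_monomial, map_smul, hbasis, smul_monomial]
  simp [div_eq_mul_inv]

theorem pderiv_pintegral_of_ne {i j : σ} (hji : j ≠ i) (p : MvPolynomial σ R) :
    pderiv j (pintegral i p) = pintegral i (pderiv j p) := by
  classical
  induction p using MvPolynomial.induction_on' with
  | monomial d c =>
    rw [pintegral_monomial, pderiv_monomial, pderiv_monomial, pintegral_monomial]
    have hexp : d + Finsupp.single i 1 - Finsupp.single j 1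
        = d - Finsupp.single j 1 + Finsupp.single i 1 := by
      ext k
      simp only [Finsupp.tsub_apply, Finsupp.add_apply, Finsupp.single_apply]
      grind
    simp [hexp, hji, div_mul_eq_mul_div]
  | add p q hp hq => rw [map_add, map_add, hp, hq, map_add, map_add]

theorem totalDegree_pintegral_le (i : σ) (p : MvPolynomial σ R) :
    (pintegral i p).totalDegree ≤ p.totalDegree + 1 :=
  totalDegree_linearMap_le (fun d c => by
    rw [pintegral_monomial]
    refine (totalDegree_monomial_le _ _).trans_eq ?_
    rw [Finsupp.sum_add_index' (fun _ => rfl) (fun _ _ _ => rfl), Finsupp.sum_single_index rfl]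
    rfl) p

variable [CharZero R]

theorem pderiv_pintegral (i : σ) (p : MvPolynomial σ R) : pderiv i (pintegral i p) = p := by
  induction p using MvPolynomial.induction_on' with
  | monomial d c =>
    rw [pintegral_monomial, pderiv_monomial, add_tsub_cancel_right]
    simp [div_mul_cancel₀ c (Nat.cast_add_one_ne_zero (d i))]
  | add p q hp hq => rw [map_add, map_add, hp, hq]

theorem pintegral_pderiv_monomial (i : σ) (d : σ →₀ ℕ) (c : R) :
    pintegral i (pderiv i (monomial d c)) = if d i = 0 then 0 else monomial d c := by
  rw [pderiv_monomial, pintegral_monomial]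
  split_ifs with hdi
  · simp [hdi]
  · have hdi_pos : 1 ≤ d i := Nat.one_le_iff_ne_zero.mpr hdi
    have hle : Finsupp.single i 1 ≤ d := Finsupp.single_le_iff.mpr hdi_pos
    have hdeg : ((d - Finsupp.single i 1 : σ →₀ ℕ) i : R) + 1 = d i := by
      rw [Finsupp.tsub_apply, Finsupp.single_eq_same, Nat.cast_sub hdi_pos]
      ring
    rw [tsub_add_cancel_of_le hle, hdeg, mul_div_cancel_right₀ c (Nat.cast_ne_zero.mpr hdi)]

theorem totalDegree_pintegral_pderiv_le (i : σ) (p : MvPolynomial σ R) :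
    (pintegral i (pderiv i p)).totalDegree ≤ p.totalDegree := by
  have hmonomial (d : σ →₀ ℕ) (c : R) :
      (pintegral i (pderiv i (monomial d c))).totalDegree ≤ (d.sum fun _ e => e) + 0 := by
    rw [pintegral_pderiv_monomial]
    split_ifs
    · simp
    · exact totalDegree_monomial_le _ _
  exact totalDegree_linearMap_le (f := pintegral i ∘ₗ (pderiv i).toLinearMap) hmonomial p

end MvPolynomial

/-- `v 2 - pintegral 2 (pderiv 2 (v 2))` is `v₃` restricted to the plane `z = 0`. -/
noncomputable def curlPotential (v : Fin 3 → MvPolynomial (Fin 3) ℝ) :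
    Fin 3 → MvPolynomial (Fin 3) ℝ :=
  ![pintegral 2 (v 1), pintegral 0 (v 2 - pintegral 2 (pderiv 2 (v 2))) - pintegral 2 (v 0), 0]

theorem totalDegree_curlPotential_le {ℓ : ℕ} {v : Fin 3 → MvPolynomial (Fin 3) ℝ}
    (hv : ∀ i, (v i).totalDegree ≤ ℓ) (i : Fin 3) : (curlPotential v i).totalDegree ≤ ℓ + 1 := by
  have hintegral {p : MvPolynomial (Fin 3) ℝ} (j : Fin 3) (hp : p.totalDegree ≤ ℓ) :
      (pintegral j p).totalDegree ≤ ℓ + 1 :=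
    (totalDegree_pintegral_le j p).trans (Nat.add_le_add_right hp 1)
  fin_cases i
  · exact hintegral 2 (hv 1)
  · refine (totalDegree_sub _ _).trans (max_le (hintegral 0 ?_) (hintegral 2 (hv 0)))
    exact (totalDegree_sub _ _).trans
      (max_le (hv 2) ((totalDegree_pintegral_pderiv_le 2 _).trans (hv 2)))
  · simp [curlPotential]

theorem pcurl3_curlPotential {v : Fin 3 → MvPolynomial (Fin 3) ℝ}
    (hdiv : pderiv 0 (v 0) + pderiv 1 (v 1) + pderiv 2 (v 2) = 0) :
    pcurl3 (curlPotential v) = v := by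
  funext i
  fin_cases i
  · show pderiv 1 0 - pderiv 2 (pintegral 0 (v 2 - pintegral 2 (pderiv 2 (v 2)))
      - pintegral 2 (v 0)) = v 0
    rw [map_sub, pderiv_pintegral_of_ne (by decide), map_sub, pderiv_pintegral, sub_self,
      map_zero, map_zero, pderiv_pintegral, zero_sub, zero_sub, neg_neg]
  · show pderiv 2 (pintegral 2 (v 1)) - pderiv 0 0 = v 1
    rw [pderiv_pintegral, map_zero, sub_zero]
  · show pderiv 0 (pintegral 0 (v 2 - pintegral 2 (pderiv 2 (v 2))) - pintegral 2 (v 0))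
      - pderiv 1 (pintegral 2 (v 1)) = v 2
    have hdiv_integral := congrArg (pintegral 2) hdiv
    rw [map_add, map_add, map_zero] at hdiv_integral
    rw [map_sub, pderiv_pintegral, pderiv_pintegral_of_ne (by decide),
      pderiv_pintegral_of_ne (by decide)]
    linear_combination -hdiv_integral

/-- Every divergence-free polynomial vector field of degree at most `ℓ` on
`ℝ³` is the curl of a polynomial vector field of degree at most `ℓ + 1`. -/
theorem exists_curl_potential_of_div_free (ℓ : ℕ) (v : Fin 3 → MvPolynomial (Fin 3) ℝ)
    (hv : ∀ i, (v i).totalDegree ≤ ℓ)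
    (hdiv : ∀ x : Fin 3 → ℝ, (∑ i, eval x (pderiv i (v i))) = 0) :
    ∃ w : Fin 3 → MvPolynomial (Fin 3) ℝ, (∀ i, (w i).totalDegree ≤ ℓ + 1) ∧
      ∀ (x : Fin 3 → ℝ) (i : Fin 3), eval x (pcurl3 w i) = eval x (v i) := by
  have hdiv_poly : pderiv 0 (v 0) + pderiv 1 (v 1) + pderiv 2 (v 2) = 0 :=
    MvPolynomial.funext fun x => by simpa [Fin.sum_univ_three] using hdiv x
  exact ⟨curlPotential v, totalDegree_curlPotential_le hv, fun x i => by
    rw [pcurl3_curlPotential hdiv_poly]⟩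
end

section
/- Let k ≥ 0 be an integer, x̄ ∈ ℝ³, and let v ∈ NE^k(x̄) be a Nédélec vector field of degree k. Then curl v belongs to the Raviart–Thomas space RT^k(x̄): there exist w ∈ P^k(ℝ³)³ and q ∈ P^k(ℝ³) such that (curl v)(x) = w(x) + (x − x̄) q(x) for all x ∈ ℝ³. -/
open MvPolynomial

/-- Cross product of triples of polynomials. -/
noncomputable def pcross3 (a b : Fin 3 → MvPolynomial (Fin 3) ℝ) :
    Fin 3 → MvPolynomial (Fin 3) ℝ :=
  ![a 1 * b 2 - a 2 * b 1, a 2 * b 0 - a 0 * b 2, a 0 * b 1 - a 1 * b 0]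

/-- The polynomial vector field `x ↦ x − x̄`. -/
noncomputable def xSub (xbar : Fin 3 → ℝ) : Fin 3 → MvPolynomial (Fin 3) ℝ :=
  fun i => X i - C (xbar i)

lemma pderiv_as_sum (i : Fin 3) (p : MvPolynomial (Fin 3) ℝ) :
    pderiv i p = ∑ s ∈ p.support,
      monomial (s - Finsupp.single i 1) (coeff s p * s i) := by
  conv_lhs => rw [p.as_sum]
  rw [map_sum]
  simp [pderiv_monomial]

lemma totalDegree_pderiv_succ_le (i : Fin 3) (p : MvPolynomial (Fin 3) ℝ)
    (h0 : pderiv i p ≠ 0) : (pderiv i p).totalDegree + 1 ≤ p.totalDegree := by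
  have hne : 1 ≤ p.totalDegree := by
    by_contra h1
    have hdeg : p.totalDegree = 0 := by omega
    apply h0
    rw [pderiv_as_sum]
    apply Finset.sum_eq_zero
    intro s hs
    have := (totalDegree_eq_zero_iff _ p).1 hdeg s hs i
    simp [this]
  have key : (pderiv i p).totalDegree ≤ p.totalDegree - 1 := by
    rw [pderiv_as_sum]
    refine le_trans (totalDegree_finset_sum _ _) (Finset.sup_le ?_)
    intro s hs
    by_cases hsi : s i = 0
    · simp [hsi]
    · refine le_trans (totalDegree_monomial_le _ _) ?_
      have hsle : (s.sum fun _ n => n) ≤ p.totalDegree := le_totalDegree hs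
      have hsum : ((s - Finsupp.single i 1).sum fun _ => id) + 1 ≤ s.sum fun _ n => n := by
        rw [Finsupp.sum_fintype _ _ (fun _ => rfl), Finsupp.sum_fintype _ _ (fun _ => rfl)]
        rw [Fin.sum_univ_three, Fin.sum_univ_three]
        simp only [Finsupp.tsub_apply, Finsupp.single_apply, id_eq]
        fin_cases i <;> simp_all <;> omega
      omega
  omega

lemma mul_pderiv_deg_le (j i : Fin 3) (c : ℝ) (k : ℕ) (p : MvPolynomial (Fin 3) ℝ)
    (hp : p.totalDegree ≤ k) : ((X j - C c) * pderiv i p).totalDegree ≤ k := by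
  by_cases h0 : pderiv i p = 0
  · simp [h0]
  · have h1 := totalDegree_pderiv_succ_le i p h0
    have h2 := totalDegree_mul (X j - C c) (pderiv i p)
    have h3 : (X j - C c : MvPolynomial (Fin 3) ℝ).totalDegree ≤ 1 := by
      refine le_trans (totalDegree_sub _ _) ?_
      simp [totalDegree_X, totalDegree_C]
    omega

/-- The curl of a Nédélec field of degree `k` belongs to the
Raviart–Thomas space `RT^k(x̄)`. -/
theorem curl_nedelec_mem_raviartThomas (k : ℕ) (xbar : Fin 3 → ℝ)
    (v : Fin 3 → MvPolynomial (Fin 3) ℝ)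
    (hv : ∃ w z : Fin 3 → MvPolynomial (Fin 3) ℝ,
      (∀ i, (w i).totalDegree ≤ k) ∧ (∀ i, (z i).totalDegree ≤ k) ∧
      ∀ i, v i = w i + pcross3 (xSub xbar) z i) :
    ∃ (w' : Fin 3 → MvPolynomial (Fin 3) ℝ) (q : MvPolynomial (Fin 3) ℝ),
      (∀ i, (w' i).totalDegree ≤ k) ∧ q.totalDegree ≤ k ∧
      ∀ (x : Fin 3 → ℝ) (i : Fin 3),
        eval x (pcurl3 v i) = eval x (w' i) + (x i - xbar i) * eval x q := by
  obtain ⟨w, z, hw, hz, hvz⟩ := hv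
  set q : MvPolynomial (Fin 3) ℝ := pderiv 0 (z 0) + pderiv 1 (z 1) + pderiv 2 (z 2) with hq
  set w' : Fin 3 → MvPolynomial (Fin 3) ℝ := fun i =>
    pcurl3 w i - (z i + z i) -
      (xSub xbar 0 * pderiv 0 (z i) + xSub xbar 1 * pderiv 1 (z i)
        + xSub xbar 2 * pderiv 2 (z i)) with hw'
  have hdq : q.totalDegree ≤ k := by
    have h0 : (pderiv (0 : Fin 3) (z 0)).totalDegree ≤ k := by
      by_cases h : pderiv (0 : Fin 3) (z 0) = 0
      · simp [h]
      · have := totalDegree_pderiv_succ_le 0 (z 0) h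
        have := hz 0; omega
    have h1 : (pderiv (1 : Fin 3) (z 1)).totalDegree ≤ k := by
      by_cases h : pderiv (1 : Fin 3) (z 1) = 0
      · simp [h]
      · have := totalDegree_pderiv_succ_le 1 (z 1) h
        have := hz 1; omega
    have h2 : (pderiv (2 : Fin 3) (z 2)).totalDegree ≤ k := by
      by_cases h : pderiv (2 : Fin 3) (z 2) = 0
      · simp [h]
      · have := totalDegree_pderiv_succ_le 2 (z 2) h
        have := hz 2; omega
    calc q.totalDegree ≤ max (max (pderiv (0:Fin 3) (z 0)).totalDegree
            (pderiv (1:Fin 3) (z 1)).totalDegree) (pderiv (2:Fin 3) (z 2)).totalDegree := by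
          refine le_trans (totalDegree_add _ _) ?_
          exact max_le_max (totalDegree_add _ _) le_rfl
      _ ≤ k := by omega
  have hdw' : ∀ i, (w' i).totalDegree ≤ k := by
    intro i
    have hcurl : (pcurl3 w i).totalDegree ≤ k := by
      have hb : ∀ a b : Fin 3, (pderiv a (w b)).totalDegree ≤ k := by
        intro a b
        by_cases h : pderiv a (w b) = 0
        · simp [h]
        · have := totalDegree_pderiv_succ_le a (w b) h
          have := hw b; omega
      fin_cases i <;>
        simpa [pcurl3] using le_trans (totalDegree_sub _ _) (max_le (hb _ _) (hb _ _))
    have hzz : (z i + z i).totalDegree ≤ k := by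
      refine le_trans (totalDegree_add _ _) ?_
      simp [hz i]
    have hm : ∀ j : Fin 3, (xSub xbar j * pderiv j (z i)).totalDegree ≤ k := fun j =>
      mul_pderiv_deg_le j j (xbar j) k (z i) (hz i)
    have hsum : (xSub xbar 0 * pderiv 0 (z i) + xSub xbar 1 * pderiv 1 (z i)
        + xSub xbar 2 * pderiv 2 (z i)).totalDegree ≤ k := by
      refine le_trans (totalDegree_add _ _) (max_le ?_ (hm 2))
      exact le_trans (totalDegree_add _ _) (max_le (hm 0) (hm 1))
    rw [hw']
    refine le_trans (totalDegree_sub _ _) (max_le ?_ hsum)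
    exact le_trans (totalDegree_sub _ _) (max_le hcurl hzz)
  refine ⟨w', q, hdw', hdq, ?_⟩
  have hpoly : ∀ i, pcurl3 v i = w' i + xSub xbar i * q := by
    have hx : ∀ a b : Fin 3, pderiv a (xSub xbar b) = if a = b then 1 else 0 := by
      intro a b
      simp [xSub, pderiv_X, Pi.single_apply, eq_comm]
    intro i
    fin_cases i <;>
    · simp [pcurl3, hw', hq, Matrix.cons_val_zero, Matrix.cons_val_one, Matrix.head_cons,
        Matrix.cons_val_two, Matrix.tail_cons, Matrix.cons_val_fin_one, Fin.isValue,
        hvz, pcross3, map_add, map_sub, pderiv_mul, hx]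
      ring
  intro x i
  rw [hpoly i]
  simp [xSub]
end
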